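/- With the setup of the Euclidean discrete conformal deformation (l_i = e^{u_j+u_k} l_i⁰ etc., satisfying strict triangle inequalities, angles from the cosine law), one has ∂θ_i/∂u_i = -cot θ_j - cot θ_k. -/

import Mathlib

/-!
The triangle with sides `l_i, e^t l_j, e^t l_k` is similar to the one with sides
`e^{-t} l_i, l_j, l_k`, so `∂θ_i/∂u_i = -l_i ∂θ_i/∂l_i`. Differentiating the cosine law gives
`∂θ_i/∂l_i = 2 l_i / √H`, where `H` is Heron's product, while `cot θ = (b² + c² - a²) / √H` for the
angle opposite `a`, so `cot θ_j + cot θ_k = 2 l_i² / √H`.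
-/

noncomputable def angOpp (a b c : ℝ) : ℝ := Real.arccos ((b ^ 2 + c ^ 2 - a ^ 2) / (2 * b * c))

open Real

/-- Sixteen times the squared area of the triangle with sides `a, b, c`. -/
def heron (a b c : ℝ) : ℝ := (a + b + c) * (-a + b + c) * (a - b + c) * (a + b - c)

section Triangle

variable {a b c : ℝ}

theorem heron_rotate (a b c : ℝ) : heron b c a = heron a b c := by
  unfold heron; ring

theorem heron_pos (hab : c < a + b) (hbc : a < b + c) (hca : b < c + a) : 0 < heron a b c := by
  unfold heron
  have : 0 < a + b + c := by linarith
  have : 0 < -a + b + c := by linarith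
  have : 0 < a - b + c := by linarith
  have : 0 < a + b - c := by linarith
  positivity

theorem one_sub_sq_cosineLaw (hb : b ≠ 0) (hc : c ≠ 0) :
    1 - ((b ^ 2 + c ^ 2 - a ^ 2) / (2 * b * c)) ^ 2 = heron a b c / (2 * b * c) ^ 2 := by
  unfold heron; field_simp; ring

theorem sqrt_one_sub_sq_cosineLaw (hab : c < a + b) (hbc : a < b + c) (hca : b < c + a) :
    √(1 - ((b ^ 2 + c ^ 2 - a ^ 2) / (2 * b * c)) ^ 2) = √(heron a b c) / (2 * b * c) := by
  have hb : 0 < b := by linarith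
  have hc : 0 < c := by linarith
  rw [one_sub_sq_cosineLaw hb.ne' hc.ne', sqrt_div' _ (by positivity), sqrt_sq (by positivity)]

theorem abs_cosineLaw_lt_one (hab : c < a + b) (hbc : a < b + c) (hca : b < c + a) :
    |(b ^ 2 + c ^ 2 - a ^ 2) / (2 * b * c)| < 1 := by
  have hb : 0 < b := by linarith
  have hc : 0 < c := by linarith
  have h := one_sub_sq_cosineLaw (a := a) hb.ne' hc.ne'
  have : 0 < heron a b c / (2 * b * c) ^ 2 := div_pos (heron_pos hab hbc hca) (by positivity)
  rw [← sq_lt_one_iff_abs_lt_one]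
  linarith

theorem cos_angOpp (hab : c < a + b) (hbc : a < b + c) (hca : b < c + a) :
    cos (angOpp a b c) = (b ^ 2 + c ^ 2 - a ^ 2) / (2 * b * c) := by
  obtain ⟨h₁, h₂⟩ := abs_lt.mp (abs_cosineLaw_lt_one hab hbc hca)
  exact cos_arccos h₁.le h₂.le

theorem sin_angOpp (hab : c < a + b) (hbc : a < b + c) (hca : b < c + a) :
    sin (angOpp a b c) = √(heron a b c) / (2 * b * c) := by
  rw [angOpp, sin_arccos, sqrt_one_sub_sq_cosineLaw hab hbc hca]

theorem cot_angOpp (hab : c < a + b) (hbc : a < b + c) (hca : b < c + a) :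
    cos (angOpp a b c) / sin (angOpp a b c) = (b ^ 2 + c ^ 2 - a ^ 2) / √(heron a b c) := by
  have hb : 0 < b := by linarith
  have hc : 0 < c := by linarith
  rw [cos_angOpp hab hbc hca, sin_angOpp hab hbc hca, div_div_div_cancel_right₀ (by positivity)]

theorem angOpp_mul {s : ℝ} (hs : s ≠ 0) (a b c : ℝ) :
    angOpp (s * a) (s * b) (s * c) = angOpp a b c := by
  unfold angOpp
  congr 1
  rw [show (s * b) ^ 2 + (s * c) ^ 2 - (s * a) ^ 2 = s ^ 2 * (b ^ 2 + c ^ 2 - a ^ 2) by ring,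
    show 2 * (s * b) * (s * c) = s ^ 2 * (2 * b * c) by ring,
    mul_div_mul_left _ _ (pow_ne_zero 2 hs)]

theorem hasDerivAt_angOpp_left (hab : c < a + b) (hbc : a < b + c) (hca : b < c + a) :
    HasDerivAt (fun x => angOpp x b c) (2 * a / √(heron a b c)) a := by
  have hb : 0 < b := by linarith
  have hc : 0 < c := by linarith
  obtain ⟨h₁, h₂⟩ := abs_lt.mp (abs_cosineLaw_lt_one hab hbc hca)
  have hinner : HasDerivAt (fun x => (b ^ 2 + c ^ 2 - x ^ 2) / (2 * b * c))
      (-(2 * a) / (2 * b * c)) a := by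
    simpa using (((hasDerivAt_pow 2 a).const_sub (b ^ 2 + c ^ 2)).div_const (2 * b * c))
  refine ((hasDerivAt_arccos h₁.ne' h₂.ne).comp a hinner).congr_deriv ?_
  rw [sqrt_one_sub_sq_cosineLaw hab hbc hca]
  have := heron_pos hab hbc hca
  field_simp

end Triangle

theorem yamabe_dtheta_i_du_i_general
    (li0 lj0 lk0 : ℝ)
    (ui uj uk : ℝ)
    (li lj lk : ℝ)
    (hli : li = Real.exp (uj + uk) * li0)
    (hlj : lj = Real.exp (ui + uk) * lj0)
    (hlk : lk = Real.exp (ui + uj) * lk0)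
    (h1 : li + lj > lk) (h2 : lj + lk > li) (h3 : lk + li > lj) :
    HasDerivAt
      (fun t : ℝ => angOpp (Real.exp (uj + uk) * li0) (Real.exp (t + uk) * lj0)
        (Real.exp (t + uj) * lk0))
      (-(Real.cos (angOpp lj lk li) / Real.sin (angOpp lj lk li))
        - Real.cos (angOpp lk li lj) / Real.sin (angOpp lk li lj)) ui := by
  have hscaled : (fun t : ℝ => angOpp (exp (uj + uk) * li0) (exp (t + uk) * lj0)
      (exp (t + uj) * lk0)) = fun t => angOpp (exp (ui - t) * li) lj lk := by
    funext t
    rw [← angOpp_mul (exp_ne_zero (t - ui)) (exp (ui - t) * li) lj lk, hli, hlj, hlk]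
    simp only [← mul_assoc, ← exp_add]
    ring_nf
  have hpath : HasDerivAt (fun t => exp (ui - t) * li) (-li) ui := by
    simpa using (((hasDerivAt_id ui).const_sub ui).exp).mul_const li
  have hderiv := (hasDerivAt_angOpp_left h1 h2 h3).comp_of_eq ui hpath (by simp)
  rw [hscaled, cot_angOpp h2 h3 h1, cot_angOpp h3 h1 h2, heron_rotate li lj lk, ← heron_rotate lk li lj]
  exact hderiv.congr_deriv (by ring)

/-- Euclidean discrete conformal deformation: `∂θ_i/∂u_i = -cot θ_j - cot θ_k`. -/
theorem yamabe_dtheta_i_du_i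
    (li0 lj0 lk0 : ℝ) (hli0 : 0 < li0) (hlj0 : 0 < lj0) (hlk0 : 0 < lk0)
    (ui uj uk : ℝ)
    (li lj lk : ℝ)
    (hli : li = Real.exp (uj + uk) * li0)
    (hlj : lj = Real.exp (ui + uk) * lj0)
    (hlk : lk = Real.exp (ui + uj) * lk0)
    (h1 : li + lj > lk) (h2 : lj + lk > li) (h3 : lk + li > lj) :
    HasDerivAt
      (fun t : ℝ => angOpp (Real.exp (uj + uk) * li0) (Real.exp (t + uk) * lj0)
        (Real.exp (t + uj) * lk0))
      (-(Real.cos (angOpp lj lk li) / Real.sin (angOpp lj lk li))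
        - Real.cos (angOpp lk li lj) / Real.sin (angOpp lk li lj)) ui :=
  yamabe_dtheta_i_du_i_general li0 lj0 lk0 ui uj uk li lj lk hli hlj hlk h1 h2 h3
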